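/- Let a₁,…,a_N be nonnegative reals and Q₁,…,Q_N vectors in ℂ³. Then (∑_{ℓ=1}^N ∑_{j≠ℓ} a_{ℓj} |Q_j| |Q_ℓ|) ≤ (max_{ℓ} ∑_{j≠ℓ} a_{ℓj}) · ∑_{j=1}^N |Q_j|², whenever the weights satisfy a_{ℓj} = a_{jℓ}. In particular, if a_{ℓj} = ‖z_ℓ − z_j‖^{−1} with min_{ℓ≠j}‖z_ℓ−z_j‖ ≥ d and the points z_j lie in a fixed bounded domain, then ∑_{ℓ}∑_{j≠ℓ} ‖z_ℓ−z_j‖^{−1}|Q_j||Q_ℓ| ≤ C d^{−3}·N^{1/2}·d^{3/2}·∑_j|Q_j|² for a constant C depending only on the domain. -/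

import Mathlib

/-!
Schur test: `a ℓ j |Q_j| |Q_ℓ| ≤ a ℓ j (|Q_j|² + |Q_ℓ|²) / 2`, and by the symmetry of `a` both
resulting double sums equal `∑_ℓ (∑_{j ≠ ℓ} a ℓ j) |Q_ℓ|² / 2`.

For the weights `‖z_ℓ - z_j‖⁻¹`: if `z_j` is the `k`-th nearest neighbour of `z_ℓ`, at distance `r`,
then the `k` disjoint balls of radius `d / 2` around the points at distance `≤ r` lie in a ball of
radius `3r / 2`, so `k d³ ≤ 27 r³`. With `r ≤ diam Ω` this gives `r⁻¹ ≤ √(27 diam Ω / d³) / √k`,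
and `∑_{k ≤ N} k^{-1/2} ≤ 2 √N` bounds every row sum by `2 √(27 diam Ω) d^{-3/2} √N`.
-/

open Finset

noncomputable section

abbrev E3 := EuclideanSpace ℝ (Fin 3)
abbrev C3 := EuclideanSpace ℂ (Fin 3)

open Metric MeasureTheory Module

theorem schur_test_offDiag {ι : Type*} [Fintype ι] [DecidableEq ι] (a : ι → ι → ℝ)
    (x : ι → ℝ) (M : ℝ) (ha : ∀ ℓ j, 0 ≤ a ℓ j) (hsymm : ∀ ℓ j, a ℓ j = a j ℓ)
    (hrow : ∀ ℓ, ∑ j ∈ univ.erase ℓ, a ℓ j ≤ M) :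
    ∑ ℓ, ∑ j ∈ univ.erase ℓ, a ℓ j * x j * x ℓ ≤ M * ∑ j, x j ^ 2 := by
  have hrow_sq : ∑ ℓ, ∑ j ∈ univ.erase ℓ, a ℓ j * x ℓ ^ 2 ≤ M * ∑ j, x j ^ 2 := by
    rw [mul_sum]
    gcongr with ℓ
    rw [← sum_mul]
    exact mul_le_mul_of_nonneg_right (hrow ℓ) (sq_nonneg _)
  have hswap : ∑ ℓ, ∑ j ∈ univ.erase ℓ, a ℓ j * x j ^ 2
      = ∑ ℓ, ∑ j ∈ univ.erase ℓ, a ℓ j * x ℓ ^ 2 := by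
    rw [sum_comm' (t' := univ) (s' := fun j => univ.erase j)
      (by simp only [mem_univ, mem_erase]; tauto)]
    simp only [hsymm]
  calc ∑ ℓ, ∑ j ∈ univ.erase ℓ, a ℓ j * x j * x ℓ
      ≤ ∑ ℓ, ∑ j ∈ univ.erase ℓ, (a ℓ j * x j ^ 2 / 2 + a ℓ j * x ℓ ^ 2 / 2) := by
        gcongr with ℓ _ j
        nlinarith [mul_nonneg (ha ℓ j) (sq_nonneg (x j - x ℓ))]
    _ = ∑ ℓ, ∑ j ∈ univ.erase ℓ, a ℓ j * x ℓ ^ 2 := by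
        simp only [sum_add_distrib, ← sum_div, hswap]; ring
    _ ≤ M * ∑ j, x j ^ 2 := hrow_sq

theorem card_mul_pow_le_of_separated {E ι : Type*} [NormedAddCommGroup E] [NormedSpace ℝ E]
    [FiniteDimensional ℝ E] (s : Finset ι) (z : ι → E) {x : E} {r ε : ℝ}
    (hr : 0 ≤ r) (hε : 0 < ε) (hz : ∀ i ∈ s, z i ∈ closedBall x r)
    (hsep : ∀ i ∈ s, ∀ j ∈ s, i ≠ j → 2 * ε ≤ dist (z i) (z j)) :
    #s * ε ^ finrank ℝ E ≤ (r + ε) ^ finrank ℝ E := by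
  borelize E
  let μ : Measure E := Measure.addHaar
  have hdisj : (s : Set ι).PairwiseDisjoint (fun i => ball (z i) ε) := fun i hi j hj hij =>
    ball_disjoint_ball (by linarith [hsep i hi j hj hij])
  have hsub : (⋃ i ∈ s, ball (z i) ε) ⊆ ball x (r + ε) :=
    Set.iUnion₂_subset fun i hi => ball_subset_ball' (by linarith [mem_closedBall.1 (hz i hi)])
  have hvol : (#s : ENNReal) * ENNReal.ofReal (ε ^ finrank ℝ E) * μ (ball 0 1)
      ≤ ENNReal.ofReal ((r + ε) ^ finrank ℝ E) * μ (ball 0 1) :=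
    calc (#s : ENNReal) * ENNReal.ofReal (ε ^ finrank ℝ E) * μ (ball 0 1)
        = μ (⋃ i ∈ s, ball (z i) ε) := by
          rw [measure_biUnion_finset hdisj fun i _ => measurableSet_ball]
          simp only [μ.addHaar_ball_of_pos _ hε, sum_const, nsmul_eq_mul, mul_assoc]
      _ ≤ μ (ball x (r + ε)) := measure_mono hsub
      _ = ENNReal.ofReal ((r + ε) ^ finrank ℝ E) * μ (ball 0 1) :=
          μ.addHaar_ball_of_pos _ (by linarith)
  have hvol' := (ENNReal.mul_le_mul_iff_left (measure_ball_pos μ _ one_pos).ne'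
    measure_ball_lt_top.ne).1 hvol
  rw [← ENNReal.ofReal_natCast, ← ENNReal.ofReal_mul (by positivity),
    ENNReal.ofReal_le_ofReal_iff (by positivity)] at hvol'
  exact hvol'

theorem sum_le_sum_range_of_le_rank {ι α : Type*} [DecidableEq ι] [LinearOrder α]
    (s : Finset ι) (r : ι → α) (f : ι → ℝ) {G : ℕ → ℝ} (hG : AntitoneOn G (Set.Ici 1))
    (hf : ∀ j ∈ s, f j ≤ G #{j' ∈ s | r j' ≤ r j}) :
    ∑ j ∈ s, f j ≤ ∑ k ∈ range #s, G (k + 1) := by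
  induction s using Finset.induction_on_max_value r with
  | empty => simp
  | insert a s ha hmax ih =>
    have hrank_a : #{j' ∈ insert a s | r j' ≤ r a} = #s + 1 := by
      rw [filter_true_of_mem (by simpa using hmax), card_insert_of_notMem ha]
    have hrank_pos : ∀ j ∈ s, 1 ≤ #{j' ∈ s | r j' ≤ r j} := fun j hj =>
      card_pos.2 ⟨j, mem_filter.2 ⟨hj, le_rfl⟩⟩
    have hrank_mono : ∀ j, #{j' ∈ s | r j' ≤ r j} ≤ #{j' ∈ insert a s | r j' ≤ r j} :=
      fun j => card_le_card (filter_subset_filter _ (subset_insert a s))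
    rw [sum_insert ha, card_insert_of_notMem ha, sum_range_succ, add_comm]
    gcongr
    · refine ih fun j hj => (hf j (mem_insert_of_mem hj)).trans ?_
      exact hG (Set.mem_Ici.2 (hrank_pos j hj))
        (Set.mem_Ici.2 ((hrank_pos j hj).trans (hrank_mono j))) (hrank_mono j)
    · exact hrank_a ▸ hf a (mem_insert_self a s)

theorem sum_range_inv_sqrt_succ_le (n : ℕ) :
    ∑ k ∈ range n, (√(k + 1 : ℝ))⁻¹ ≤ 2 * √n := by
  induction n with
  | zero => simp
  | succ n ih =>
    rw [sum_range_succ]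
    have hb : 0 < √(n + 1 : ℝ) := Real.sqrt_pos.2 (by positivity)
    have hstep : (√(n + 1 : ℝ))⁻¹ ≤ 2 * √(n + 1 : ℝ) - 2 * √n := by
      rw [inv_le_iff_one_le_mul₀' hb]
      nlinarith [Real.sq_sqrt (n.cast_nonneg : (0 : ℝ) ≤ n),
        Real.sq_sqrt (by positivity : (0 : ℝ) ≤ n + 1), sq_nonneg (√(n + 1 : ℝ) - √n)]
    push_cast
    linarith

section SeparatedPoints

variable {E ι : Type*} [NormedAddCommGroup E] [NormedSpace ℝ E] [FiniteDimensional ℝ E]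
  [Fintype ι] [DecidableEq ι] {z : ι → E} {d D : ℝ}

theorem inv_norm_sub_le_div_sqrt_rank (hE : finrank ℝ E = 3) (hd : 0 < d)
    (hsep : ∀ i j, i ≠ j → d ≤ ‖z i - z j‖) (hdiam : ∀ i j, ‖z i - z j‖ ≤ D) {ℓ j : ι}
    (hj : j ∈ univ.erase ℓ) :
    ‖z ℓ - z j‖⁻¹ ≤ √(27 * D / d ^ 3) *
      (√(#{j' ∈ univ.erase ℓ | ‖z ℓ - z j'‖ ≤ ‖z ℓ - z j‖} : ℝ))⁻¹ := by
  set r : ι → ℝ := fun j => ‖z ℓ - z j‖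
  set c : ℝ := ((#{j' ∈ univ.erase ℓ | r j' ≤ r j} : ℕ) : ℝ)
  have hD : 0 ≤ D := (norm_nonneg _).trans (hdiam ℓ ℓ)
  have hdr : d ≤ r j := hsep ℓ j (ne_of_mem_erase hj).symm
  have hr : 0 < r j := hd.trans_le hdr
  have hc : 0 < c := Nat.cast_pos.2 (card_pos.2 ⟨j, mem_filter.2 ⟨hj, le_rfl⟩⟩)
  have hpack : c * (d / 2) ^ 3 ≤ (r j + d / 2) ^ 3 := by
    rw [← hE]
    refine card_mul_pow_le_of_separated _ z (x := z ℓ) (by linarith) (by linarith)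
      (fun i hi => ?_) (fun i _ i' _ hii' => by rw [dist_eq_norm]; linarith [hsep i i' hii'])
    rw [mem_closedBall, dist_eq_norm, norm_sub_rev]
    exact (mem_filter.1 hi).2
  have hcube : c * d ^ 3 ≤ 27 * D * r j ^ 2 := by
    have := pow_le_pow_left₀ (by linarith) (show r j + d / 2 ≤ 3 / 2 * r j by linarith) 3
    nlinarith [hdiam ℓ j, sq_nonneg (r j)]
  rw [← Real.sqrt_inv, ← Real.sqrt_mul (by positivity)]
  refine Real.le_sqrt_of_sq_le ?_
  field_simp
  rw [div_le_iff₀ (pow_pos hr 2)]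
  linarith

theorem sum_erase_inv_norm_sub_le (hE : finrank ℝ E = 3) (hd : 0 < d)
    (hsep : ∀ i j, i ≠ j → d ≤ ‖z i - z j‖) (hdiam : ∀ i j, ‖z i - z j‖ ≤ D) (ℓ : ι) :
    ∑ j ∈ univ.erase ℓ, ‖z ℓ - z j‖⁻¹ ≤ 2 * √(27 * D / d ^ 3) * √(Fintype.card ι) := by
  set A := √(27 * D / d ^ 3)
  have hG : AntitoneOn (fun k : ℕ => A * (√(k : ℝ))⁻¹) (Set.Ici 1) := fun m hm n _ hmn => by
    have hm : (0 : ℝ) < m := Nat.cast_pos.2 hm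
    dsimp only
    gcongr
  calc ∑ j ∈ univ.erase ℓ, ‖z ℓ - z j‖⁻¹
      ≤ ∑ k ∈ range #(univ.erase ℓ), A * (√((k + 1 : ℕ) : ℝ))⁻¹ :=
        sum_le_sum_range_of_le_rank _ (fun j => ‖z ℓ - z j‖) _ hG
          fun _ hj => inv_norm_sub_le_div_sqrt_rank hE hd hsep hdiam hj
    _ = A * ∑ k ∈ range #(univ.erase ℓ), (√(k + 1 : ℝ))⁻¹ := by
        rw [mul_sum]; push_cast; rfl
    _ ≤ A * (2 * √(#(univ.erase ℓ) : ℝ)) := by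
        gcongr; exact sum_range_inv_sqrt_succ_le _
    _ ≤ 2 * A * √(Fintype.card ι) := by
        rw [mul_left_comm, ← mul_assoc]
        gcongr
        exact card_erase_le

end SeparatedPoints

/-- The quadratic-form summation estimate with symmetric nonnegative weights, and its
consequence for points with pairwise separation `d` in a fixed bounded domain `Ω ⊂ ℝ³`. -/
theorem weighted_quadratic_form_estimate :
    (∀ (N : ℕ) (a : Fin N → Fin N → ℝ) (Q : Fin N → C3) (M : ℝ),
        (∀ ℓ j, 0 ≤ a ℓ j) → (∀ ℓ j, a ℓ j = a j ℓ) →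
        (∀ ℓ, ∑ j ∈ Finset.univ.erase ℓ, a ℓ j ≤ M) →
        (∑ ℓ, ∑ j ∈ Finset.univ.erase ℓ, a ℓ j * ‖Q j‖ * ‖Q ℓ‖)
          ≤ M * ∑ j, ‖Q j‖ ^ 2) ∧
    (∀ Ω : Set E3, Bornology.IsBounded Ω → ∃ C > 0,
      ∀ (N : ℕ) (d : ℝ) (z : Fin N → E3) (Q : Fin N → C3),
        0 < d → (∀ i, z i ∈ Ω) →
        (∀ i j, i ≠ j → d ≤ ‖z i - z j‖) →
        (∑ ℓ, ∑ j ∈ Finset.univ.erase ℓ, ‖z ℓ - z j‖⁻¹ * ‖Q j‖ * ‖Q ℓ‖)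
          ≤ C * d ^ (-3 : ℝ) * Real.sqrt N * d ^ ((3 : ℝ) / 2) * ∑ j, ‖Q j‖ ^ 2) := by
  refine ⟨fun N a Q M ha hsymm hrow => schur_test_offDiag a (fun j => ‖Q j‖) M ha hsymm hrow, ?_⟩
  intro Ω hΩ
  -- `+ 1` keeps `C` positive when `Ω` has diameter `0`.
  refine ⟨2 * √(27 * (diam Ω + 1)), by positivity, fun N d z Q hd hz hsep => ?_⟩
  have hdiam : ∀ i j, ‖z i - z j‖ ≤ diam Ω + 1 := fun i j => by
    rw [← dist_eq_norm]
    linarith [dist_le_diam_of_mem hΩ (hz i) (hz j)]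
  have hscale : √((d ^ 3)⁻¹) = d ^ (-3 : ℝ) * d ^ ((3 : ℝ) / 2) := by
    rw [← Real.rpow_natCast, ← Real.rpow_neg_one, ← Real.rpow_mul hd.le, Real.sqrt_eq_rpow,
      ← Real.rpow_mul hd.le, ← Real.rpow_add hd]
    norm_num
  calc _ ≤ 2 * √(27 * (diam Ω + 1) / d ^ 3) * √(Fintype.card (Fin N)) * ∑ j, ‖Q j‖ ^ 2 :=
        schur_test_offDiag _ (fun j => ‖Q j‖) _ (fun _ _ => by positivity)
          (fun ℓ j => by rw [norm_sub_rev])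
          (sum_erase_inv_norm_sub_le finrank_euclideanSpace_fin hd hsep hdiam)
    _ = _ := by
        rw [Fintype.card_fin, div_eq_mul_inv, Real.sqrt_mul (by positivity), hscale]
        ring
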